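/- arXiv:2504.18909 — 3 statements merged into one kernel-verified Lean document; each statement's English description precedes it below -/
import Mathlib

section
/- Let R be a commutative local ring of characteristic 2 such that ([1] − [u])·([1] − [v]) = 0 in GW(R) for all units u, v of R. Then every element of GW(R) can be written uniquely in the form k·[1] + ([1] − [u]) for an integer k and a square class [u] ∈ G(R); that is, the map ℤ × G(R) → GW(R) sending (k, [u]) to k·[1] + ([1] − [u]) is a well-defined isomorphism of abelian groups (where G(R) is viewed as an abelian group). -/
noncomputable section

/-- The subgroup of squares of units of a commutative ring. -/
def squareUnits (R : Type) [CommRing R] : Subgroup Rˣ :=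
  (powMonoidHom 2 : Rˣ →* Rˣ).range

/-- The group of square classes `Rˣ/(Rˣ)²`. -/
def SqCl (R : Type) [CommRing R] : Type := Rˣ ⧸ squareUnits R

instance (R : Type) [CommRing R] : CommGroup (SqCl R) :=
  QuotientGroup.Quotient.commGroup (squareUnits R)

/-- The square class `[a]` of a unit `a`. -/
def cls {R : Type} [CommRing R] (a : Rˣ) : SqCl R := QuotientGroup.mk a

/-- The group ring `ℤ[Rˣ/(Rˣ)²]`. -/
abbrev GRing (R : Type) [CommRing R] := MonoidAlgebra ℤ (SqCl R)

/-- The generator `[a]` of the group ring, for a unit `a`. -/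
def gen {R : Type} [CommRing R] (a : Rˣ) : GRing R :=
  MonoidAlgebra.of ℤ (SqCl R) (cls a)

/-- The set of relations defining the Grothendieck–Witt ring of a (connected semi-)local ring:
`([a₁]+[a₂]+[a₃]+[a₄]) − ([b₁]+[b₂]+[b₃]+[b₄])` whenever there exists `P ∈ GL₄(R)` with
`P ⬝ diag(a₁,…,a₄) ⬝ Pᵀ = diag(b₁,…,b₄)`. -/
def gwRel (R : Type) [CommRing R] : Set (GRing R) :=
  {x | ∃ (a b : Fin 4 → Rˣ) (P : Matrix (Fin 4) (Fin 4) R),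
    IsUnit P.det ∧
    P * Matrix.diagonal (fun i => (a i : R)) * P.transpose =
      Matrix.diagonal (fun i => (b i : R)) ∧
    x = (∑ i, gen (a i)) - (∑ i, gen (b i))}

/-- The (symmetric) Grothendieck–Witt ring of `R`, presented à la Knebusch–Rosenberg–Ware. -/
abbrev GW (R : Type) [CommRing R] := GRing R ⧸ Ideal.span (gwRel R)

/-- The class `[a] ∈ GW(R)` of a unit `a`. -/
def gw {R : Type} [CommRing R] (a : Rˣ) : GW R :=
  Ideal.Quotient.mk (Ideal.span (gwRel R)) (gen a)

/-- The (symmetric) Witt ring of `R` : the quotient of `GW(R)` by the ideal generated by the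
hyperbolic element `[1] + [-1]`. -/
abbrev Wr (R : Type) [CommRing R] := GW R ⧸ Ideal.span {gw (R := R) 1 + gw (-1)}

/-- The class in the Witt ring of a unit `a`. -/
def wcl {R : Type} [CommRing R] (a : Rˣ) : Wr R :=
  Ideal.Quotient.mk (Ideal.span {gw (R := R) 1 + gw (-1)}) (gw a)

/-! The rank and the determinant of diagonal forms respect isometry, so they define a ring map
`GW(R) → ℤ ⊕ G(R)` into the square-zero extension of `ℤ` by `G(R)`; it sends `k·[1] + ([1] − [u])`
to `(k, −[u])`, which gives injectivity. The hypothesis says `[u][v] = [u] + [v] − [1]`, so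
`(k, [u]) ↦ k·[1] + ([1] − [u])` is additive, and it is onto because `[u]·[u] = [1]` forces
`2·[1] − [u] = [u]`. -/

variable {R : Type} [CommRing R]

theorem cls_surjective : Function.Surjective (cls (R := R)) :=
  QuotientGroup.mk_surjective

theorem cls_mul (a b : Rˣ) : cls (a * b) = cls a * cls b := rfl

theorem SqCl.mul_self (x : SqCl R) : x * x = 1 := by
  obtain ⟨u, rfl⟩ := cls_surjective x
  exact (QuotientGroup.eq_one_iff _).mpr ⟨u, sq u⟩

theorem prod_cls_eq_of_mul_diagonal_mul_transpose {n : Type} [Fintype n] [DecidableEq n]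
    {a b : n → Rˣ} {P : Matrix n n R} (hP : IsUnit P.det)
    (hPab : P * Matrix.diagonal (fun i => (a i : R)) * P.transpose =
      Matrix.diagonal (fun i => (b i : R))) :
    ∏ i, cls (a i) = ∏ i, cls (b i) := by
  have hdet : hP.unit ^ 2 * ∏ i, a i = ∏ i, b i := by
    have h := congrArg Matrix.det hPab
    rw [Matrix.det_mul, Matrix.det_mul, Matrix.det_transpose, Matrix.det_diagonal,
      Matrix.det_diagonal] at h
    ext
    simp only [Units.val_mul, Units.val_pow_eq_pow_val, IsUnit.unit_spec, Units.coe_prod]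
    linear_combination h
  have hsq : cls (hP.unit ^ 2) = 1 := (QuotientGroup.eq_one_iff _).mpr ⟨hP.unit, rfl⟩
  calc ∏ i, cls (a i) = cls (∏ i, a i) := (QuotientGroup.mk_prod _ _).symm
    _ = cls (hP.unit ^ 2 * ∏ i, a i) := by rw [cls_mul, hsq, one_mul]
    _ = ∏ i, cls (b i) := by rw [hdet]; exact QuotientGroup.mk_prod _ _

variable (R) in
def gwHom : SqCl R →* GW R :=
  (Ideal.Quotient.mk (Ideal.span (gwRel R)) : GRing R →* GW R).comp
    (MonoidAlgebra.of ℤ (SqCl R))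

theorem gw_eq_gwHom_cls (a : Rˣ) : gw a = gwHom R (cls a) := rfl

theorem gw_one : gw (1 : Rˣ) = 1 := map_one (gwHom R)

/- `TrivSqZeroExt ℤ M` asks for a right `ℤ`-action on `M` as well; take the left one. -/
instance (R : Type) [CommRing R] : Module ℤᵐᵒᵖ (Additive (SqCl R)) :=
  Module.compHom _ (RingEquiv.toOpposite ℤ).symm.toRingHom

instance (R : Type) [CommRing R] : IsCentralScalar ℤ (Additive (SqCl R)) :=
  ⟨fun _ _ => rfl⟩

open TrivSqZeroExt

variable (R) in
def rankDet : GRing R →ₐ[ℤ] TrivSqZeroExt ℤ (Additive (SqCl R)) :=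
  MonoidAlgebra.lift ℤ _ (SqCl R)
    { toFun := fun x => inl 1 + inr (Additive.ofMul x)
      map_one' := by ext <;> simp
      map_mul' := fun x y => by ext <;> simp [add_comm] }

theorem rankDet_of (x : SqCl R) :
    rankDet R (MonoidAlgebra.of ℤ (SqCl R) x) = inl 1 + inr (Additive.ofMul x) :=
  MonoidAlgebra.lift_of _ _

theorem rankDet_eq_zero_of_mem_gwRel {z : GRing R} (hz : z ∈ gwRel R) : rankDet R z = 0 := by
  obtain ⟨a, b, P, hP, hPab, rfl⟩ := hz
  have hprod := prod_cls_eq_of_mul_diagonal_mul_transpose hP hPab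
  simp only [gen, map_sub, map_sum, rankDet_of]
  ext
  · simp [fst_sum]
  · simp [snd_sum, hprod]

variable (R) in
def gwRankDet : GW R →+* TrivSqZeroExt ℤ (Additive (SqCl R)) :=
  Ideal.Quotient.lift _ (rankDet R) fun _ hz =>
    (Ideal.span_le (I := RingHom.ker (rankDet R))).mpr (fun _ => rankDet_eq_zero_of_mem_gwRel) hz

theorem gwRankDet_gwHom (x : SqCl R) :
    gwRankDet R (gwHom R x) = inl 1 + inr (Additive.ofMul x) :=
  (Ideal.Quotient.lift_mk _ _ _).trans (rankDet_of x)

section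

variable (h : ∀ u v : Rˣ, (gw (R := R) 1 - gw u) * (gw 1 - gw v) = 0)
include h

theorem gwHom_mul_eq_add_sub_one (x y : SqCl R) : gwHom R (x * y) = gwHom R x + gwHom R y - 1 := by
  obtain ⟨u, rfl⟩ := cls_surjective x
  obtain ⟨v, rfl⟩ := cls_surjective y
  have huv := h u v
  rw [gw_one, gw_eq_gwHom_cls, gw_eq_gwHom_cls] at huv
  linear_combination huv + map_mul (gwHom R) (cls u) (cls v)

def gwParam : ℤ × Additive (SqCl R) →+ GW R :=
  AddMonoidHom.mk' (fun p => p.1 • 1 + (1 - gwHom R p.2.toMul)) fun p q => by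
    simp only [Prod.fst_add, Prod.snd_add, toMul_add, gwHom_mul_eq_add_sub_one h, add_smul]
    ring

theorem gwRankDet_gwParam (p : ℤ × Additive (SqCl R)) :
    gwRankDet R (gwParam h p) = inl p.1 - inr p.2 := by
  ext <;> simp [gwParam, gwRankDet_gwHom]

theorem gwParam_injective : Function.Injective (gwParam h) := fun p q hpq => by
  have hrd := congrArg (gwRankDet R) hpq
  rw [gwRankDet_gwParam, gwRankDet_gwParam] at hrd
  exact Prod.ext (by simpa using congrArg fst hrd) (by simpa using congrArg snd hrd)

theorem gwHom_eq_gwParam (x : SqCl R) : gwHom R x = gwParam h (1, Additive.ofMul x) := by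
  have hxx := gwHom_mul_eq_add_sub_one h x x
  rw [SqCl.mul_self, map_one] at hxx
  simp only [gwParam, AddMonoidHom.mk'_apply, toMul_ofMul, one_smul]
  linear_combination -hxx

theorem gwParam_surjective : Function.Surjective (gwParam h) := by
  intro y
  obtain ⟨z, rfl⟩ := Ideal.Quotient.mk_surjective y
  change _ ∈ (gwParam h).range
  induction z using MonoidAlgebra.induction_on with
  | of x => exact ⟨_, (gwHom_eq_gwParam h x).symm⟩
  | add z w hz hw => rw [map_add]; exact add_mem hz hw
  | smul n z hz => rw [map_zsmul]; exact zsmul_mem hz n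

end

theorem gw_square_zero_extension_general
    (R : Type) [CommRing R]
    (h : ∀ u v : Rˣ, (gw (R := R) 1 - gw u) * (gw 1 - gw v) = 0) :
    ∃ e : ℤ × Additive (SqCl R) ≃+ GW R,
      ∀ (k : ℤ) (u : Rˣ),
        e (k, Additive.ofMul (cls u)) = k • gw (R := R) 1 + (gw 1 - gw u) := by
  refine ⟨AddEquiv.ofBijective (gwParam h) ⟨gwParam_injective h, gwParam_surjective h⟩,
    fun k u => ?_⟩
  rw [gw_one, gw_eq_gwHom_cls]
  rfl

/-- If `R` is a commutative local ring of characteristic `2` in which all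
2-fold Pfister forms vanish, then every element of `GW(R)` is uniquely of the form
`k·[1] + ([1] − [u])`: the map `(k, [u]) ↦ k·[1] + ([1] − [u])` is an isomorphism of abelian
groups `ℤ × G(R) ≅ GW(R)`. -/
theorem gw_square_zero_extension
    (R : Type) [CommRing R] [IsLocalRing R] [CharP R 2]
    (h : ∀ u v : Rˣ, (gw (R := R) 1 - gw u) * (gw 1 - gw v) = 0) :
    ∃ e : ℤ × Additive (SqCl R) ≃+ GW R,
      ∀ (k : ℤ) (u : Rˣ),
        e (k, Additive.ofMul (cls u)) = k • gw (R := R) 1 + (gw 1 - gw u) :=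
  gw_square_zero_extension_general R h

end
end

section
/- For n ≥ 1 let Rₙ := 𝔽₂[x]/(xⁿ). The group homomorphism G(R_{n+1}) → G(Rₙ) on square classes induced by the canonical projection R_{n+1} → Rₙ is surjective, and its kernel is the subgroup of G(R_{n+1}) generated by the square class [1 + xⁿ] of the unit 1 + xⁿ. -/
/-!
The kernel of the projection `𝔽₂[x]/(x^{n+1}) → 𝔽₂[x]/(xⁿ)` is `{0, xⁿ}`, and `(xⁿ)² = 0` for
`n ≥ 1`. Hence units lift along the projection, which gives surjectivity on square classes, and
the units mapping to `1` are exactly `1` and the involution `1 + xⁿ`. The kernel on square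
classes is the image of `{1, 1 + xⁿ}`.
-/

noncomputable section

/-- The group homomorphism on square classes induced by a ring homomorphism. -/
def clsMap {R S : Type} [CommRing R] [CommRing S] (φ : R →+* S) : SqCl R →* SqCl S :=
  QuotientGroup.map (squareUnits R) (squareUnits S) (Units.map (φ : R →* S)) (by
    rintro x ⟨y, rfl⟩
    exact ⟨Units.map (φ : R →* S) y, by simp [powMonoidHom]⟩)

/-- The ring `𝔽₂[x]/(xⁿ)` of truncated polynomials. -/
abbrev Rtrunc (n : ℕ) : Type :=
  Polynomial (ZMod 2) ⧸ Ideal.span {(Polynomial.X : Polynomial (ZMod 2)) ^ n}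

/-- The class of `x` in `𝔽₂[x]/(xⁿ)`. -/
def xbar (n : ℕ) : Rtrunc n :=
  Ideal.Quotient.mk (Ideal.span {(Polynomial.X : Polynomial (ZMod 2)) ^ n}) Polynomial.X

/-- The canonical projection `𝔽₂[x]/(x^{n+1}) → 𝔽₂[x]/(xⁿ)`. -/
def truncMap (n : ℕ) : Rtrunc (n + 1) →+* Rtrunc n :=
  Ideal.Quotient.factor
    (Ideal.span_singleton_le_span_singleton.mpr (pow_dvd_pow Polynomial.X n.le_succ))

section SquareClasses

variable {R S : Type} [CommRing R] [CommRing S]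

lemma unitsMap_surjective_of_isNilpotent_ker {φ : R →+* S} (hφ : Function.Surjective φ)
    (hker : ∀ k ∈ RingHom.ker φ, IsNilpotent k) :
    Function.Surjective (Units.map (φ : R →* S)) := by
  intro v
  obtain ⟨a, ha⟩ := hφ v
  obtain ⟨b, hb⟩ := hφ ↑v⁻¹
  have hab : IsUnit (a * b) := by
    have hk : a * b - 1 ∈ RingHom.ker φ := by simp [RingHom.mem_ker, ha, hb]
    simpa using (hker _ hk).isUnit_one_add
  exact ⟨(isUnit_of_mul_isUnit_left hab).unit, Units.ext ha⟩

variable (φ : R →+* S)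

lemma clsMap_surjective (hφ : Function.Surjective (Units.map (φ : R →* S))) :
    Function.Surjective (clsMap φ) := by
  intro y
  obtain ⟨v, rfl⟩ := QuotientGroup.mk_surjective y
  obtain ⟨w, rfl⟩ := hφ v
  exact ⟨cls w, rfl⟩

lemma ker_clsMap (hφ : Function.Surjective (Units.map (φ : R →* S))) {s : Set Rˣ}
    (hs : (Units.map (φ : R →* S)).ker = Subgroup.closure s) :
    (clsMap φ).ker = Subgroup.closure (cls '' s) := by
  suffices h : (clsMap φ).ker = (Units.map (φ : R →* S)).ker.map (QuotientGroup.mk' _) by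
    rw [h, hs, MonoidHom.map_closure]
    rfl
  refine (QuotientGroup.ker_map _ _ _ _).trans
    (le_antisymm ?_ (Subgroup.map_mono fun w hw => ⟨1, by simpa using hw.symm⟩))
  rintro _ ⟨w, ⟨t, ht⟩, rfl⟩
  obtain ⟨t, rfl⟩ := hφ t
  -- `w` and `w / t ^ 2` have the same square class, and the latter maps to `1`
  refine ⟨w * (t ^ 2)⁻¹, ?_, ?_⟩
  · rw [powMonoidHom_apply] at ht
    rw [SetLike.mem_coe, MonoidHom.mem_ker, map_mul, map_inv, map_pow, ht, mul_inv_cancel]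
  · exact (QuotientGroup.eq_iff_div_mem).mpr ⟨t⁻¹, by simp [inv_pow]⟩

end SquareClasses

section Truncated

open Polynomial

variable {n : ℕ}

lemma rtrunc_two_eq_zero (m : ℕ) : (2 : Rtrunc m) = 0 := by
  rw [← map_ofNat (algebraMap (ZMod 2) (Rtrunc m)) 2, show (OfNat.ofNat 2 : ZMod 2) = 0 from rfl,
    map_zero]

lemma xbar_pow_self (m : ℕ) : xbar m ^ m = 0 := by
  rw [xbar, ← map_pow, Ideal.Quotient.eq_zero_iff_mem]
  exact Ideal.subset_span rfl

lemma truncMap_mk (p : (ZMod 2)[X]) : truncMap n (Ideal.Quotient.mk _ p) = Ideal.Quotient.mk _ p :=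
  Ideal.Quotient.factor_mk _ p

lemma truncMap_surjective (n : ℕ) : Function.Surjective (truncMap n) :=
  Ideal.Quotient.factor_surjective _

lemma truncMap_xbar_pow : truncMap n (xbar (n + 1) ^ n) = 0 := by
  rw [map_pow, xbar, truncMap_mk, ← xbar, xbar_pow_self]

lemma truncMap_eq_zero_iff {k : Rtrunc (n + 1)} :
    truncMap n k = 0 ↔ k = 0 ∨ k = xbar (n + 1) ^ n := by
  refine ⟨fun hk => ?_, by rintro (rfl | rfl) <;> simp [truncMap_xbar_pow]⟩
  obtain ⟨p, rfl⟩ := Ideal.Quotient.mk_surjective k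
  rw [truncMap_mk, Ideal.Quotient.eq_zero_iff_mem, Ideal.mem_span_singleton] at hk
  obtain ⟨q, rfl⟩ := hk
  -- modulo `x ^ (n + 1)`, the product `x ^ n * q` only sees the constant term of `q`
  have hq : X ^ n * q = X ^ n * C (q.coeff 0) + X ^ (n + 1) * q.divX := by
    conv_lhs => rw [← X_mul_divX_add q]
    ring
  have hhigh : Ideal.Quotient.mk (Ideal.span {(X : (ZMod 2)[X]) ^ (n + 1)})
      (X ^ (n + 1) * q.divX) = 0 :=
    Ideal.Quotient.eq_zero_iff_mem.mpr (Ideal.mem_span_singleton.mpr ⟨q.divX, rfl⟩)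
  rw [hq, map_add, hhigh, add_zero, map_mul]
  rcases (by decide : ∀ c : ZMod 2, c = 0 ∨ c = 1) (q.coeff 0) with hc | hc
  · simp [hc]
  · simp [hc, xbar]

lemma sq_eq_zero_of_truncMap_eq_zero (hn : 1 ≤ n) {k : Rtrunc (n + 1)} (hk : truncMap n k = 0) :
    k ^ 2 = 0 := by
  rcases truncMap_eq_zero_iff.mp hk with rfl | rfl
  · simp
  · rw [← pow_mul, show n * 2 = (n + 1) + (n - 1) by omega, pow_add, xbar_pow_self, zero_mul]

lemma one_add_sq_eq_one_of_truncMap_eq_zero (hn : 1 ≤ n) {k : Rtrunc (n + 1)}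
    (hk : truncMap n k = 0) : (1 + k) ^ 2 = 1 := by
  linear_combination k * rtrunc_two_eq_zero (n + 1) + sq_eq_zero_of_truncMap_eq_zero hn hk

def oneAddXPowUnit (hn : 1 ≤ n) : (Rtrunc (n + 1))ˣ :=
  have h : (1 + xbar (n + 1) ^ n) * (1 + xbar (n + 1) ^ n) = 1 := by
    rw [← sq]; exact one_add_sq_eq_one_of_truncMap_eq_zero hn truncMap_xbar_pow
  ⟨1 + xbar (n + 1) ^ n, 1 + xbar (n + 1) ^ n, h, h⟩

lemma ker_unitsMap_truncMap (hn : 1 ≤ n) :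
    (Units.map (truncMap n : Rtrunc (n + 1) →* Rtrunc n)).ker =
      Subgroup.closure {oneAddXPowUnit hn} := by
  refine le_antisymm (fun w hw => ?_) ?_
  · have hw1 : truncMap n ((w : Rtrunc (n + 1)) - 1) = 0 := by
      rw [map_sub, map_one, sub_eq_zero]
      exact congrArg Units.val hw
    rcases truncMap_eq_zero_iff.mp hw1 with h | h
    · rw [show w = 1 from Units.ext (sub_eq_zero.mp h)]
      exact one_mem _
    · rw [show w = oneAddXPowUnit hn from Units.ext (eq_add_of_sub_eq' h)]
      exact Subgroup.subset_closure rfl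
  · rw [Subgroup.closure_le, Set.singleton_subset_iff]
    exact Units.ext (by simp [oneAddXPowUnit, truncMap_xbar_pow])

end Truncated

/-- For `n ≥ 1`, the induced map on square classes
`G(𝔽₂[x]/(x^{n+1})) → G(𝔽₂[x]/(xⁿ))` is surjective with kernel generated by the square class
of the unit `1 + xⁿ`. -/
theorem sqcl_trunc_exact (n : ℕ) (hn : 1 ≤ n) :
    ∃ u : (Rtrunc (n + 1))ˣ,
      (u : Rtrunc (n + 1)) = 1 + xbar (n + 1) ^ n ∧
      Function.Surjective (clsMap (truncMap n)) ∧
      (clsMap (truncMap n)).ker = Subgroup.closure {cls u} := by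
  have hunits := unitsMap_surjective_of_isNilpotent_ker (truncMap_surjective n)
    fun k hk => ⟨2, sq_eq_zero_of_truncMap_eq_zero hn hk⟩
  refine ⟨oneAddXPowUnit hn, rfl, clsMap_surjective _ hunits, ?_⟩
  rw [ker_clsMap _ hunits (ker_unitsMap_truncMap hn), Set.image_singleton]

end
end

section
/- For n ≥ 1 let Rₙ := 𝔽₂[x]/(xⁿ) and let R := 𝔽₂[[x]] be the ring of formal power series over 𝔽₂. The canonical map G(R) → lim_n G(Rₙ), sending the square class of a unit u ∈ Rˣ to the compatible family of square classes of its truncations in each Rₙ, is an isomorphism of abelian groups, where lim_n G(Rₙ) is the inverse limit of the groups of square classes along the maps induced by the projections R_{n+1} → Rₙ (realized as the subgroup of the product ∏_n G(Rₙ) consisting of compatible families). -/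
noncomputable section

/-- The ring `𝔽₂[x]/(xⁿ)` of truncated polynomials, presented as the quotient of `𝔽₂[[x]]`
by the ideal `(xⁿ)`. -/
abbrev RT (n : ℕ) : Type :=
  PowerSeries (ZMod 2) ⧸ Ideal.span {(PowerSeries.X : PowerSeries (ZMod 2)) ^ n}

/-- The canonical projection (truncation) `𝔽₂[[x]] → 𝔽₂[x]/(xⁿ)`. -/
def truncProj (n : ℕ) : PowerSeries (ZMod 2) →+* RT n :=
  Ideal.Quotient.mk (Ideal.span {(PowerSeries.X : PowerSeries (ZMod 2)) ^ n})

/-- The canonical projection `𝔽₂[x]/(x^{n+1}) → 𝔽₂[x]/(xⁿ)`. -/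
def projDown (n : ℕ) : RT (n + 1) →+* RT n :=
  Ideal.Quotient.factor
    (Ideal.span_singleton_le_span_singleton.mpr (pow_dvd_pow PowerSeries.X n.le_succ))

/-- The canonical comparison map from the square classes of `𝔽₂[[x]]` to the product of the
square classes of all the truncations `𝔽₂[x]/(xⁿ)`, `n ≥ 1`. -/
def cmpMap : SqCl (PowerSeries (ZMod 2)) →* ∀ n : ℕ, SqCl (RT (n + 1)) :=
  Pi.monoidHom fun n => clsMap (truncProj (n + 1))

/-! Since Frobenius is the identity on `𝔽₂`, squaring a power series substitutes `x²` for `x`, so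
a unit of `𝔽₂[[x]]` is a square exactly when its odd coefficients vanish; a square modulo
`x^(n+1)` already kills the odd coefficients below `n + 1`, which gives injectivity. For
surjectivity, units of the truncations lift to units of `𝔽₂[[x]]`, so a compatible family of
classes can be represented by units that agree to ever higher order, each new representative being
corrected by a square; their coefficientwise limit represents the whole family. -/

open PowerSeries

theorem PowerSeries.sq_eq_expand_two (f : (ZMod 2)⟦X⟧) : f ^ 2 = expand 2 two_ne_zero f := by
  ext n
  have hfrob : trunc (n + 1) f ^ 2 = Polynomial.expand (ZMod 2) 2 (trunc (n + 1) f) := by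
    rw [← Polynomial.map_frobenius_expand, ZMod.frobenius_zmod, Polynomial.map_id]
  rw [sq, coeff_mul_eq_coeff_trunc_mul_trunc f f n.lt_succ_self, ← Polynomial.coe_mul, ← sq,
    hfrob, Polynomial.coeff_coe, Polynomial.coeff_expand two_pos, coeff_expand]
  split_ifs
  · rw [coeff_trunc, if_pos (by omega)]
  · rfl

theorem PowerSeries.coeff_sq_eq_zero_of_odd (f : (ZMod 2)⟦X⟧) {n : ℕ} (hn : Odd n) :
    coeff n (f ^ 2) = 0 := by
  rw [sq_eq_expand_two, coeff_expand_of_not_dvd _ _ _ hn.not_two_dvd_nat]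

theorem PowerSeries.isSquare_of_coeff_odd_eq_zero {f : (ZMod 2)⟦X⟧}
    (hf : ∀ n, Odd n → coeff n f = 0) : IsSquare f := by
  refine ⟨mk fun i => coeff (2 * i) f, ?_⟩
  rw [← sq, sq_eq_expand_two]
  ext n
  rw [coeff_expand]
  split_ifs with h
  · rw [coeff_mk, Nat.mul_div_cancel' h]
  · exact hf n (Nat.odd_iff.mpr (Nat.two_dvd_ne_zero.mp h))

theorem PowerSeries.exists_coeff_eq_of_coeff_succ_eq {A : Type*} [Semiring A] (f : ℕ → A⟦X⟧)
    (hf : ∀ n, ∀ i ≤ n, coeff i (f (n + 1)) = coeff i (f n)) :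
    ∃ g : A⟦X⟧, ∀ n, ∀ i ≤ n, coeff i g = coeff i (f n) := by
  refine ⟨mk fun i => coeff i (f i), fun n i hi => ?_⟩
  induction n, hi using Nat.le_induction with
  | base => exact coeff_mk ..
  | succ n hin ih => rw [ih, hf n i hin]

section SquareClasses

variable {R S T : Type} [CommRing R] [CommRing S] [CommRing T]

theorem mem_squareUnits_iff_isSquare {u : Rˣ} : u ∈ squareUnits R ↔ IsSquare (u : R) := by
  refine ⟨fun ⟨r, hr⟩ => ⟨r, by rw [← hr, powMonoidHom_apply, Units.val_pow_eq_pow_val, sq]⟩,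
    fun ⟨r, hr⟩ => ?_⟩
  have hr' : IsUnit r := isUnit_of_mul_isUnit_left (hr ▸ u.isUnit)
  exact ⟨hr'.unit, Units.ext (by simp [hr, sq])⟩

theorem cls_eq_one_iff {u : Rˣ} : cls u = 1 ↔ IsSquare (u : R) :=
  (QuotientGroup.eq_one_iff u).trans mem_squareUnits_iff_isSquare

theorem cls_eq_cls_iff {a b : Rˣ} : cls a = cls b ↔ ∃ d : Rˣ, b = a * d ^ 2 := by
  refine QuotientGroup.eq.trans ⟨fun ⟨d, hd⟩ => ⟨d, ?_⟩, fun ⟨d, hd⟩ => ⟨d, ?_⟩⟩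
  · rw [powMonoidHom_apply] at hd
    rw [hd, mul_inv_cancel_left]
  · rw [powMonoidHom_apply, hd, inv_mul_cancel_left]

theorem clsMap_comp (ψ : S →+* T) (φ : R →+* S) :
    clsMap (ψ.comp φ) = (clsMap ψ).comp (clsMap φ) := by
  refine MonoidHom.ext fun a => ?_
  obtain ⟨u, rfl⟩ := QuotientGroup.mk_surjective a
  rfl

end SquareClasses

def truncUnits (n : ℕ) : (ZMod 2)⟦X⟧ˣ →* (RT n)ˣ := Units.map (truncProj n)

theorem cmpMap_cls (u : (ZMod 2)⟦X⟧ˣ) (n : ℕ) :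
    cmpMap (cls u) n = cls (truncUnits (n + 1) u) :=
  rfl

theorem truncProj_surjective (n : ℕ) : Function.Surjective (truncProj n) :=
  Ideal.Quotient.mk_surjective

theorem truncProj_eq_truncProj_iff {n : ℕ} {a b : (ZMod 2)⟦X⟧} :
    truncProj n a = truncProj n b ↔ ∀ i < n, coeff i a = coeff i b := by
  simp only [truncProj, Ideal.Quotient.mk_eq_mk_iff_sub_mem, Ideal.mem_span_singleton,
    X_pow_dvd_iff, map_sub, sub_eq_zero]

theorem truncUnits_eq_truncUnits_iff {n : ℕ} {u v : (ZMod 2)⟦X⟧ˣ} :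
    truncUnits n u = truncUnits n v ↔
      ∀ i < n, coeff i (u : (ZMod 2)⟦X⟧) = coeff i (v : (ZMod 2)⟦X⟧) :=
  Units.ext_iff.trans truncProj_eq_truncProj_iff

theorem truncUnits_surjective (n : ℕ) : Function.Surjective (truncUnits (n + 1)) := by
  have hle : Ideal.span {(X : (ZMod 2)⟦X⟧) ^ (n + 1)} ≤ (⊥ : Ideal (ZMod 2)⟦X⟧).jacobson := by
    rw [IsLocalRing.jacobson_eq_maximalIdeal ⊥ bot_ne_top, maximalIdeal_eq_span_X,
      Ideal.span_singleton_le_span_singleton]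
    exact dvd_pow_self X n.succ_ne_zero
  exact IsLocalRing.surjective_units_map_of_local_ringHom _ Ideal.Quotient.mk_surjective
    (isLocalHom_of_le_jacobson_bot _ hle)

theorem projDown_comp_truncProj (n : ℕ) :
    (projDown n).comp (truncProj (n + 1)) = truncProj n :=
  Ideal.Quotient.factor_comp_mk _

theorem coeff_eq_zero_of_isSquare_truncProj {a : (ZMod 2)⟦X⟧} {n : ℕ}
    (ha : IsSquare (truncProj (n + 1) a)) (hn : Odd n) : coeff n a = 0 := by
  obtain ⟨r, hr⟩ := ha
  obtain ⟨s, rfl⟩ := truncProj_surjective _ r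
  rw [← map_mul, truncProj_eq_truncProj_iff] at hr
  rw [hr n n.lt_succ_self, ← sq, coeff_sq_eq_zero_of_odd _ hn]

theorem cmpMap_injective : Function.Injective cmpMap := by
  rw [injective_iff_map_eq_one]
  rintro ⟨u⟩ hu
  have hodd : ∀ n, Odd n → coeff n (u : (ZMod 2)⟦X⟧) = 0 := fun n hn =>
    coeff_eq_zero_of_isSquare_truncProj (cls_eq_one_iff.mp (congrFun hu n)) hn
  exact cls_eq_one_iff.mpr (isSquare_of_coeff_odd_eq_zero hodd)

theorem clsMap_projDown_cmpMap (a : SqCl (ZMod 2)⟦X⟧) (n : ℕ) :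
    clsMap (projDown (n + 1)) (cmpMap a (n + 1)) = cmpMap a n := by
  change clsMap _ (clsMap _ a) = clsMap _ a
  rw [← MonoidHom.comp_apply, ← clsMap_comp, projDown_comp_truncProj]

theorem exists_truncUnits_lift {n : ℕ} (U : (ZMod 2)⟦X⟧ˣ) (c : SqCl (RT (n + 2)))
    (hU : cls (truncUnits (n + 1) U) = clsMap (projDown (n + 1)) c) :
    ∃ V : (ZMod 2)⟦X⟧ˣ,
      cls (truncUnits (n + 2) V) = c ∧ truncUnits (n + 1) V = truncUnits (n + 1) U := by
  obtain ⟨c, rfl⟩ := QuotientGroup.mk_surjective c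
  obtain ⟨w, rfl⟩ := truncUnits_surjective (n + 1) c
  obtain ⟨d, hd⟩ := cls_eq_cls_iff.mp (hU.trans (clsMap_projDown_cmpMap (cls w) n)).symm
  obtain ⟨s, rfl⟩ := truncUnits_surjective n d
  refine ⟨w * s ^ 2, ?_, ?_⟩
  · rw [map_mul, map_pow]
    exact (cls_eq_cls_iff.mpr ⟨_, rfl⟩).symm
  · rw [map_mul, map_pow, hd]
    rfl

theorem exists_cmpMap_eq (g : ∀ n : ℕ, SqCl (RT (n + 1)))
    (hg : ∀ n : ℕ, clsMap (projDown (n + 1)) (g (n + 1)) = g n) : ∃ a, cmpMap a = g := by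
  obtain ⟨U₀, hU₀⟩ : ∃ U, cls (truncUnits 1 U) = g 0 := by
    obtain ⟨c, hc⟩ := QuotientGroup.mk_surjective (g 0)
    obtain ⟨U, rfl⟩ := truncUnits_surjective 0 c
    exact ⟨U, hc⟩
  choose! next hnext using fun n U (hU : cls (truncUnits (n + 1) U) = g n) =>
    exists_truncUnits_lift U (g (n + 1)) (hU.trans (hg n).symm)
  let U : ℕ → (ZMod 2)⟦X⟧ˣ := fun n => Nat.rec (motive := fun _ => (ZMod 2)⟦X⟧ˣ) U₀ next n
  have hU : ∀ n, cls (truncUnits (n + 1) (U n)) = g n := fun n => by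
    induction n with
    | zero => exact hU₀
    | succ n ih => exact (hnext n _ ih).1
  have hstable : ∀ n, ∀ i ≤ n,
      coeff i (U (n + 1) : (ZMod 2)⟦X⟧) = coeff i (U n : (ZMod 2)⟦X⟧) := fun n i hi =>
    truncUnits_eq_truncUnits_iff.mp (hnext n _ (hU n)).2 i (Nat.lt_succ_of_le hi)
  obtain ⟨u, hu⟩ := exists_coeff_eq_of_coeff_succ_eq (fun n => (U n : (ZMod 2)⟦X⟧)) hstable
  have hunit : IsUnit u := by
    rw [isUnit_iff_constantCoeff, ← coeff_zero_eq_constantCoeff_apply, hu 0 0 le_rfl,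
      coeff_zero_eq_constantCoeff_apply]
    exact (U 0).isUnit.map _
  refine ⟨cls hunit.unit, funext fun n => ?_⟩
  rw [cmpMap_cls, ← hU n,
    truncUnits_eq_truncUnits_iff.mpr fun i hi => hu n i (Nat.le_of_lt_succ hi)]

/-- The canonical map `G(𝔽₂[[x]]) → lim_n G(𝔽₂[x]/(xⁿ))` is an isomorphism
of abelian groups: the comparison map is injective and its range is exactly the inverse limit,
i.e. the subgroup of the product consisting of the compatible families. -/
theorem sqcl_power_series_iso_lim :
    Function.Injective cmpMap ∧
    Set.range cmpMap =
      {g : ∀ n : ℕ, SqCl (RT (n + 1)) |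
        ∀ n : ℕ, clsMap (projDown (n + 1)) (g (n + 1)) = g n} := by
  refine ⟨cmpMap_injective, Set.Subset.antisymm ?_ fun g hg => exists_cmpMap_eq g hg⟩
  rintro _ ⟨a, rfl⟩ n
  exact clsMap_projDown_cmpMap a n

end
end
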